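/- Let n ≥ 1 and let p_1,…,p_n, q_1,…,q_n, r_1,…,r_n be natural numbers with r_i ≥ 1 for all i. Then the group G_E(p,q,r) is isomorphic to the infinite cyclic group ℤ if and only if exactly one of the two sums p_1 + ⋯ + p_n and q_1 + ⋯ + q_n equals 0. -/

import Mathlib

/-!
If all `q_i` vanish, the relations read `b_{i+1} = b_i^{2^{p_i}}`, so every `b_j` is a power of
`b_1`, and the last relation makes `b_1` conjugate to `b_1^{2^{Σ p}}`. An element of `2`-power
order that is conjugate to its `2^k`-th power with `k ≥ 1` is trivial, so all `b_j` die and the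
group is infinite cyclic on `t`. If all `p_i` vanish, the same argument runs backwards from `b_n`.

Conversely, `ℤ` is torsion-free, so in `G_E ≅ ℤ` every `b_j` is trivial. But if the `p_i` and the
`q_i` are both all zero or both not all zero, there is a nonzero `c : Fin n → ℤ/2` with
`2^{p_i} c_i = 2^{q_i} c_{i+1}` cyclically, giving a homomorphism `G_E → ℤ/2`, `b_j ↦ c_j`,
`t ↦ 0`, that does not kill all `b_j`. If they all vanish, `c = 1`; otherwise `c` is the
indicator of the vertices following an edge `a` with `q_a ≠ 0`, up to the nearest later edge
with `p ≠ 0`.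
-/

/-- The relators of the echinus group `G_E(p,q,r) = ⟨b_1,…,b_n, t | b_j^{2^{r_j}} = 1
(1 ≤ j ≤ n), b_i^{2^{p_i}} = b_{i+1}^{2^{q_i}} (1 ≤ i ≤ n−1),
t⁻¹ b_n^{2^{p_n}} t = b_1^{2^{q_n}}⟩`, where `some i` is `b_{i+1}` and `none` is `t`. -/
def echinusRels (n : ℕ) (hn : 0 < n) (p q r : Fin n → ℕ) :
    Set (FreeGroup (Option (Fin n))) :=
  {x | ∃ j : Fin n, x = FreeGroup.of (some j) ^ 2 ^ r j} ∪
  {x | ∃ i j : Fin n, (i : ℕ) + 1 = (j : ℕ) ∧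
      x = FreeGroup.of (some i) ^ 2 ^ p i * (FreeGroup.of (some j) ^ 2 ^ q i)⁻¹} ∪
  {(FreeGroup.of none)⁻¹ *
      FreeGroup.of (some ⟨n - 1, Nat.sub_lt hn Nat.one_pos⟩) ^
        2 ^ p ⟨n - 1, Nat.sub_lt hn Nat.one_pos⟩ *
      FreeGroup.of none *
      (FreeGroup.of (some ⟨0, hn⟩) ^ 2 ^ q ⟨n - 1, Nat.sub_lt hn Nat.one_pos⟩)⁻¹}

open Multiplicative

theorem eq_pow_prod_range_of_succ_eq_pow {M : Type*} [Monoid M] {b : ℕ → M} {e : ℕ → ℕ}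
    {m : ℕ} (h : ∀ i < m, b (i + 1) = b i ^ e i) :
    b m = b 0 ^ ∏ i ∈ Finset.range m, e i := by
  induction m with
  | zero => simp
  | succ m ih =>
    rw [h m (lt_add_one m), ih fun i hi => h i (by omega), Finset.prod_range_succ, pow_mul]

theorem eq_pow_prod_Ico_of_eq_succ_pow {M : Type*} [Monoid M] {b : ℕ → M} {e : ℕ → ℕ}
    {j m : ℕ} (hjm : j ≤ m) (h : ∀ i, j ≤ i → i < m → b i = b (i + 1) ^ e i) :
    b j = b m ^ ∏ i ∈ Finset.Ico j m, e i := by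
  induction m, hjm using Nat.le_induction with
  | base => simp
  | succ m hjm ih =>
    rw [ih fun i hji him => h i hji (by omega), h m hjm (lt_add_one m),
      Finset.prod_Ico_succ_top hjm, ← pow_mul, mul_comm]

theorem eq_one_of_isConj_pow_self {G : Type*} [Group G] {b : G} {N M j : ℕ}
    (hconj : IsConj (b ^ N) b) (hM : b ^ M = 1) (hdvd : M ∣ N ^ j) : b = 1 := by
  have hiter : ∀ k, IsConj (b ^ N ^ k) b := by
    intro k
    induction k with
    | zero => simpa using IsConj.refl b
    | succ k ih =>
      rw [pow_succ', pow_mul]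
      exact (hconj.pow _).trans ih
  obtain ⟨c, hc⟩ := hdvd
  have h1 := hiter j
  rwa [hc, pow_mul, hM, one_pow, isConj_one_right] at h1

theorem ZMod.two_pow_eq_zero {k : ℕ} (hk : k ≠ 0) : (2 : ZMod 2) ^ k = 0 := by
  rw [show (2 : ZMod 2) = 0 by decide, zero_pow hk]

section FinRing

open Fin.CommRing

theorem Fin.add_one_eq_of_val_add_one_eq {n : ℕ} [NeZero n] {i j : Fin n}
    (h : (i : ℕ) + 1 = j) : i + 1 = j := by
  ext
  rw [Fin.val_add, Fin.val_one', Nat.one_mod_eq_one.mpr (by omega), h, Nat.mod_eq_of_lt j.2]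

theorem Fin.mk_sub_one_add_one {n : ℕ} [NeZero n] (h : n - 1 < n) :
    (⟨n - 1, h⟩ : Fin n) + 1 = 0 := by
  rw [show (⟨n - 1, h⟩ : Fin n) = (Nat.cast (n - 1) : Fin n) from (Fin.cast_val_eq_self _).symm,
    ← Nat.cast_add_one, Nat.sub_add_cancel (by omega), Fin.natCast_self]

theorem Fin.sum_range_natCast {M : Type*} [AddCommMonoid M] {n : ℕ} [NeZero n] (f : Fin n → M) :
    ∑ i ∈ Finset.range n, f i = ∑ i, f i := by
  simp [← Fin.sum_univ_eq_sum_range]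

theorem exists_gap {n : ℕ} [NeZero n] {p q : Fin n → ℕ} (hp : ∃ i, p i ≠ 0)
    (hq : ∃ i, q i ≠ 0) :
    ∃ (a : Fin n) (d : ℕ), 0 < d ∧ d ≤ n ∧ q a ≠ 0 ∧ p (a + d) ≠ 0 ∧
      ∀ k, 0 < k → k < d → p (a + k) = 0 ∧ q (a + k) = 0 := by
  have hn := NeZero.pos n
  have hex : ∃ d : ℕ, 0 < d ∧ ∃ a, q a ≠ 0 ∧ p (a + d) ≠ 0 := by
    obtain ⟨e, he⟩ := hp
    obtain ⟨a, ha⟩ := hq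
    refine ⟨(e : ℕ) + n - a, by omega, a, ha, ?_⟩
    rwa [Nat.cast_sub (by omega), Nat.cast_add, Fin.natCast_self, add_zero, Fin.cast_val_eq_self,
      Fin.cast_val_eq_self, add_sub_cancel]
  obtain ⟨hd, a, ha, had⟩ := Nat.find_spec hex
  have hmin : ∀ k, 0 < k → k < Nat.find hex → ∀ a', q a' ≠ 0 → p (a' + k) = 0 :=
    fun k hk hkd a' ha' => by_contra fun h => Nat.find_min hex hkd ⟨hk, a', ha', h⟩
  refine ⟨a, Nat.find hex, hd, ?_, ha, had, fun k hk hkd => ⟨hmin k hk hkd a ha, ?_⟩⟩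
  · by_contra! hdn
    have := hmin (Nat.find hex - n) (by omega) (by omega) a ha
    rw [Nat.cast_sub hdn.le, Fin.natCast_self, sub_zero] at this
    exact had this
  · by_contra hqk
    have := hmin (Nat.find hex - k) (by omega) (by omega) (a + k) hqk
    rw [Nat.cast_sub hkd.le, add_add_sub_cancel] at this
    exact had this

theorem exists_ne_zero_two_pow_mul_eq {n : ℕ} [NeZero n] (p q : Fin n → ℕ)
    (hpq : (∀ i, p i = 0) ↔ ∀ i, q i = 0) :
    ∃ c : Fin n → ZMod 2, c ≠ 0 ∧ ∀ i, (2 : ZMod 2) ^ p i * c i = 2 ^ q i * c (i + 1) := by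
  by_cases hp : ∀ i, p i = 0
  · exact ⟨1, one_ne_zero, fun i => by simp [hp i, hpq.mp hp i]⟩
  have hq : ¬ ∀ i, q i = 0 := hpq.not.mp hp
  push Not at hp hq
  obtain ⟨a, d, hd, hdn, hqa, hpd, hint⟩ := exists_gap hp hq
  set S : Set (Fin n) := {j | ∃ k, 0 < k ∧ k ≤ d ∧ j = a + k}
  have hmem : ∀ k, 0 < k → k ≤ d → a + k ∈ S := fun k hk hkd => ⟨k, hk, hkd, rfl⟩
  refine ⟨S.indicator 1, fun h => ?_, fun i => ?_⟩
  · simpa [Set.indicator_of_mem (hmem d hd le_rfl)] using congrFun h (a + d)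
  by_cases hi : i ∈ S
  · obtain ⟨k, hk, hkd, rfl⟩ := hi
    rcases hkd.lt_or_eq with hkd | rfl
    · obtain ⟨hpk, hqk⟩ := hint k hk hkd
      have hnext : a + k + 1 ∈ S := ⟨k + 1, by omega, hkd, by push_cast; ring⟩
      simp [hpk, hqk, hnext, hmem k hk hkd.le]
    · rw [ZMod.two_pow_eq_zero hpd, zero_mul, eq_comm]
      by_cases hnext : a + k + 1 ∈ S
      · -- the segment wraps around onto itself only if it is the whole cycle, and then `a + k = a`
        obtain ⟨k', hk', hk'd, hk'k⟩ := hnext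
        have hmod : (k + 1) % n = k' % n := by
          rw [← Fin.val_natCast, ← Fin.val_natCast, Nat.cast_add_one]
          exact congrArg Fin.val (add_left_cancel ((add_assoc a _ _).symm.trans hk'k))
        have := Nat.le_of_dvd (by omega) ((Nat.modEq_iff_dvd' (by omega)).mp hmod.symm)
        obtain rfl : k = n := by omega
        rw [Fin.natCast_self, add_zero, ZMod.two_pow_eq_zero hqa, zero_mul]
      · rw [Set.indicator_of_notMem hnext, mul_zero]
  · rw [Set.indicator_of_notMem hi, mul_zero, eq_comm]
    by_cases hnext : i + 1 ∈ S
    · obtain ⟨k, hk, hkd, hik⟩ := hnext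
      obtain rfl : k = 1 := by
        by_contra hk1
        refine hi ⟨k - 1, by omega, by omega, add_right_cancel (b := 1) ?_⟩
        rw [hik, add_assoc, ← Nat.cast_add_one, Nat.sub_add_cancel hk]
      obtain rfl : i = a := by simpa using hik
      rw [ZMod.two_pow_eq_zero hqa, zero_mul]
    · rw [Set.indicator_of_notMem hnext, mul_zero]

namespace EchinusGroup

variable {n : ℕ} {hn : 0 < n} {p q r : Fin n → ℕ}

local notation "G" => PresentedGroup (echinusRels n hn p q r)

theorem of_some_pow_eq_one (j : Fin n) : (PresentedGroup.of (some j) : G) ^ 2 ^ r j = 1 := by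
  have h := PresentedGroup.one_of_mem (rels := echinusRels n hn p q r) (Or.inl (Or.inl ⟨j, rfl⟩))
  rwa [map_pow] at h

theorem of_some_pow_eq_of_some_pow {i j : Fin n} (hij : (i : ℕ) + 1 = j) :
    (PresentedGroup.of (some i) : G) ^ 2 ^ p i = PresentedGroup.of (some j) ^ 2 ^ q i := by
  have h := PresentedGroup.mk_eq_mk_of_mul_inv_mem (rels := echinusRels n hn p q r)
    (Or.inl (Or.inr ⟨i, j, hij, rfl⟩))
  rwa [map_pow, map_pow] at h

theorem of_natCast_pow_eq_of_natCast_pow [NeZero n] {k : ℕ} (hk : k + 1 < n) :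
    (PresentedGroup.of (some (k : Fin n)) : G) ^ 2 ^ p k =
      PresentedGroup.of (some ((k + 1 : ℕ) : Fin n)) ^ 2 ^ q k :=
  of_some_pow_eq_of_some_pow <| by
    rw [Fin.val_natCast, Fin.val_natCast, Nat.mod_eq_of_lt (by omega), Nat.mod_eq_of_lt hk]

theorem inv_of_none_mul_pow_mul_of_none [NeZero n] :
    (PresentedGroup.of none)⁻¹ *
        (PresentedGroup.of (some ((n - 1 : ℕ) : Fin n)) : G) ^ 2 ^ p (n - 1 : ℕ) *
      PresentedGroup.of none = PresentedGroup.of (some 0) ^ 2 ^ q (n - 1 : ℕ) := by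
  have h := PresentedGroup.mk_eq_mk_of_mul_inv_mem (rels := echinusRels n hn p q r) (Or.inr rfl)
  rw [map_mul, map_mul, map_inv, map_pow, map_pow] at h
  rwa [show ((n - 1 : ℕ) : Fin n) = ⟨n - 1, Nat.sub_lt hn Nat.one_pos⟩ from
      Fin.cast_val_eq_self (⟨n - 1, _⟩ : Fin n),
    show (0 : Fin n) = ⟨0, hn⟩ from Fin.ext (Fin.val_zero n)]

theorem of_some_eq_one_of_forall_q_eq_zero [NeZero n] (hq : ∀ i, q i = 0)
    (hp : ∑ i, p i ≠ 0) (j : Fin n) : (PresentedGroup.of (some j) : G) = 1 := by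
  let B : ℕ → G := fun k => .of (some (k : Fin n))
  have hchain : ∀ m < n, B m = B 0 ^ ∏ i ∈ Finset.range m, 2 ^ p i := fun m hm =>
    eq_pow_prod_range_of_succ_eq_pow fun i hi => calc
      B (i + 1) = B (i + 1) ^ 2 ^ q i := by simp [hq]
      _ = B i ^ 2 ^ p i := (of_natCast_pow_eq_of_natCast_pow (by omega)).symm
  have hconj : IsConj (B 0 ^ 2 ^ ∑ i, p i) (B 0) := by
    refine isConj_iff.mpr ⟨(PresentedGroup.of none)⁻¹, ?_⟩
    have h : (PresentedGroup.of none)⁻¹ * B (n - 1) ^ 2 ^ p (n - 1 : ℕ) * PresentedGroup.of none =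
        B 0 ^ 2 ^ q (n - 1 : ℕ) := inv_of_none_mul_pow_mul_of_none
    rw [hq, pow_zero, pow_one, hchain (n - 1) (by omega), ← pow_mul, ← Finset.prod_range_succ,
      Nat.sub_add_cancel hn, Finset.prod_pow_eq_pow_sum, Fin.sum_range_natCast] at h
    rwa [inv_inv]
  have hB0 : B 0 = 1 := eq_one_of_isConj_pow_self hconj (of_some_pow_eq_one _) (j := r 0) <| by
    rw [← pow_mul]; exact Nat.pow_dvd_pow 2 (Nat.le_mul_of_pos_left _ (Nat.pos_of_ne_zero hp))
  simpa [B, hB0] using hchain j j.2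

theorem of_some_eq_one_of_forall_p_eq_zero [NeZero n] (hp : ∀ i, p i = 0) (hq : ∑ i, q i ≠ 0)
    (j : Fin n) : (PresentedGroup.of (some j) : G) = 1 := by
  let B : ℕ → G := fun k => .of (some (k : Fin n))
  have hchain : ∀ m ≤ n - 1, B m = B (n - 1) ^ ∏ i ∈ Finset.Ico m (n - 1), 2 ^ q i :=
    fun m hm => eq_pow_prod_Ico_of_eq_succ_pow hm fun i _ hi => calc
      B i = B i ^ 2 ^ p i := by simp [hp]
      _ = B (i + 1) ^ 2 ^ q i := of_natCast_pow_eq_of_natCast_pow (by omega)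
  have hconj : IsConj (B (n - 1) ^ 2 ^ ∑ i, q i) (B (n - 1)) := by
    refine isConj_iff.mpr ⟨PresentedGroup.of none, ?_⟩
    have h : (PresentedGroup.of none)⁻¹ * B (n - 1) ^ 2 ^ p (n - 1 : ℕ) * PresentedGroup.of none =
        B 0 ^ 2 ^ q (n - 1 : ℕ) := inv_of_none_mul_pow_mul_of_none
    rw [hp, pow_zero, pow_one, hchain 0 (Nat.zero_le _), ← pow_mul,
      ← Finset.prod_Ico_succ_top (Nat.zero_le _), Nat.sub_add_cancel hn, ← Finset.range_eq_Ico,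
      Finset.prod_pow_eq_pow_sum, Fin.sum_range_natCast] at h
    rw [← h]
    group
  have hBlast : B (n - 1) = 1 :=
    eq_one_of_isConj_pow_self hconj (of_some_pow_eq_one _) (j := r (n - 1 : ℕ)) <| by
      rw [← pow_mul]; exact Nat.pow_dvd_pow 2 (Nat.le_mul_of_pos_left _ (Nat.pos_of_ne_zero hq))
  simpa [B, hBlast] using hchain j (by omega)

theorem eq_zero_of_forall_of_some_eq_one [NeZero n] (hr : ∀ i, 1 ≤ r i)
    (h : ∀ j, (PresentedGroup.of (some j) : G) = 1) {c : Fin n → ZMod 2}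
    (hc : ∀ i, (2 : ZMod 2) ^ p i * c i = 2 ^ q i * c (i + 1)) : c = 0 := by
  have hpow : ∀ (x : ZMod 2) (k : ℕ), ofAdd x ^ 2 ^ k = ofAdd (2 ^ k * x) := fun x k => by
    rw [← ofAdd_nsmul, nsmul_eq_mul, Nat.cast_pow, Nat.cast_ofNat]
  have hrels : ∀ w ∈ echinusRels n hn p q r,
      FreeGroup.lift (fun x : Option (Fin n) => x.elim 1 fun j => ofAdd (c j)) w = 1 := by
    rintro w ((⟨j, rfl⟩ | ⟨i, j, hij, rfl⟩) | rfl)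
    · simp [hpow, ZMod.two_pow_eq_zero (Nat.one_le_iff_ne_zero.mp (hr j))]
    · simp [hpow, hc, Fin.add_one_eq_of_val_add_one_eq hij]
    · simp [hpow, hc, Fin.mk_sub_one_add_one]
  funext k
  simpa [h k] using (PresentedGroup.toGroup.of hrels (x := some k)).symm

theorem nonempty_mulEquiv_int_iff :
    Nonempty (G ≃* Multiplicative ℤ) ↔ ∀ j, (PresentedGroup.of (some j) : G) = 1 := by
  refine ⟨fun ⟨θ⟩ j => θ.injective ?_, fun h => ?_⟩
  · rw [map_one, ← pow_eq_one_iff_left (pow_ne_zero (r j) two_ne_zero), ← map_pow,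
      of_some_pow_eq_one, map_one]
  have hrels : ∀ w ∈ echinusRels n hn p q r,
      FreeGroup.lift (fun x : Option (Fin n) => x.elim (ofAdd (1 : ℤ)) fun _ => 1) w = 1 := by
    rintro w ((⟨j, rfl⟩ | ⟨i, j, hij, rfl⟩) | rfl) <;> simp
  refine ⟨MonoidHom.toMulEquiv (PresentedGroup.toGroup hrels)
    (zpowersHom _ (PresentedGroup.of none)) ?_ ?_⟩
  · refine PresentedGroup.ext ?_
    rintro (_ | j) <;> simp [PresentedGroup.toGroup.of, h]
  · refine MonoidHom.ext_mint ?_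
    simp [PresentedGroup.toGroup.of]

theorem forall_of_some_eq_one_iff [NeZero n] (hr : ∀ i, 1 ≤ r i) :
    (∀ j, (PresentedGroup.of (some j) : G) = 1) ↔
      ((∑ i, p i = 0 ∧ ∑ i, q i ≠ 0) ∨ (∑ i, p i ≠ 0 ∧ ∑ i, q i = 0)) := by
  have hzero : ∀ f : Fin n → ℕ, ∑ i, f i = 0 ↔ ∀ i, f i = 0 := fun f => by simp
  refine ⟨fun h => ?_, ?_⟩
  · by_contra hne
    obtain ⟨c, hc0, hc⟩ := exists_ne_zero_two_pow_mul_eq p q (by rw [← hzero, ← hzero]; tauto)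
    exact hc0 (eq_zero_of_forall_of_some_eq_one hr h hc)
  · rintro (⟨hp, hq⟩ | ⟨hp, hq⟩)
    · exact of_some_eq_one_of_forall_p_eq_zero ((hzero p).mp hp) hq
    · exact of_some_eq_one_of_forall_q_eq_zero ((hzero q).mp hq) hp

end EchinusGroup

end FinRing

theorem stmt10 (n : ℕ) (hn : 0 < n) (p q r : Fin n → ℕ) (hr : ∀ i, 1 ≤ r i) :
    Nonempty (PresentedGroup (echinusRels n hn p q r) ≃* Multiplicative ℤ) ↔
      ((∑ i, p i = 0 ∧ ∑ i, q i ≠ 0) ∨ (∑ i, p i ≠ 0 ∧ ∑ i, q i = 0)) := by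
  have : NeZero n := NeZero.of_pos hn
  exact EchinusGroup.nonempty_mulEquiv_int_iff.trans (EchinusGroup.forall_of_some_eq_one_iff hr)
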